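/- Let K ≥ 1 be an integer and let ρ > 1. Then the unique two-choice profile for (ρ, K) satisfies √(1 − 1/ρ) ≤ P(ρ, K) ≤ √(1 − 1/ρ) + K 2^{−K} (1 + 1/(2√(ρ(ρ − 1)))). -/

import Mathlib

open Finset Real

noncomputable section

/-- Extend a vector `v = (v_0, …, v_K) ∈ ℝ^{K+1}` to `ℕ → ℝ` by zero,
implementing the convention `v_{K+1} = 0`. -/
def extProfile (K : ℕ) (v : Fin (K + 1) → ℝ) : ℕ → ℝ :=
  fun k => if h : k < K + 1 then v ⟨k, h⟩ else 0

/-- `v = (v_0, …, v_K)` is a two-choice profile for `(ρ, K)`: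
`1 = v_0 ≥ v_1 ≥ … ≥ v_K ≥ 0` and, with the convention `v_{K+1} = 0`,
`v_k − v_{k+1} = ρ (v_{k−1}² − v_k²)` for every `1 ≤ k ≤ K`. -/
def IsTwoChoiceProfile (ρ : ℝ) (K : ℕ) (v : Fin (K + 1) → ℝ) : Prop :=
  extProfile K v 0 = 1 ∧
  (∀ k < K, extProfile K v (k + 1) ≤ extProfile K v k) ∧
  0 ≤ extProfile K v K ∧
  ∀ k, 1 ≤ k → k ≤ K →
    extProfile K v k - extProfile K v (k + 1) =
      ρ * ((extProfile K v (k - 1)) ^ 2 - (extProfile K v k) ^ 2)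

/-- When it exists, the unique two-choice profile for `(ρ, K)`, denoted `ν_{ρ,K}`. -/
def nu (ρ : ℝ) (K : ℕ) : Fin (K + 1) → ℝ :=
  Classical.epsilon (IsTwoChoiceProfile ρ K)

/-- `ν_{ρ,K}` viewed as a function on `ℕ` (with `ν_{ρ,K}(K+1) = 0`). -/
def nuV (ρ : ℝ) (K : ℕ) : ℕ → ℝ := extProfile K (nu ρ K)

/-- `P(ρ, K) = (1 − ν_{ρ,K}(1)) + ν_{ρ,K}(K)`, the limiting proportion of
problematic (empty or full) queues. -/
def propProblematic (ρ : ℝ) (K : ℕ) : ℝ := (1 - nuV ρ K 1) + nuV ρ K K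

/-!
Telescoping the recursion shows that `v_{k+1} − ρ v_k²` is constant, equal to `−ρ v_K²`, so with
`q = v_K` and `ε = 1 − v_1` one has `ε = ρ (q² − (1 − 1/ρ))` and `P = ε + q`. This gives the lower
bound at once and reduces the upper bound to `ε ≤ K 2^{−K}`, since `q − √(1 − 1/ρ)` is at most
`ε / (2 √(ρ(ρ−1)))`. For `ρ ≥ 1` the profile satisfies `v_{k+1} ≤ v_k² − ε`, hence
`v_k ≤ (1 − ε)^{2^k − 1}`, and `ε ≤ v_K² ≤ (1 − ε)^{2^{K+1} − 2}` forces `ε ≤ K 2^{−K}`.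
-/

theorem le_one_sub_pow_of_le_sq_sub {x : ℕ → ℝ} {ε : ℝ} {n : ℕ} (hε₀ : 0 ≤ ε) (hε₁ : ε ≤ 1)
    (h₀ : x 0 = 1) (hnonneg : ∀ k < n, 0 ≤ x k) (hstep : ∀ k < n, x (k + 1) ≤ x k ^ 2 - ε) :
    ∀ k ≤ n, x k ≤ (1 - ε) ^ (2 ^ k - 1) := by
  intro k hk
  induction k with
  | zero => simp [h₀]
  | succ k ih =>
    have hxk := ih (by omega)
    have hx₀ := hnonneg k (by omega)
    have hx₁ : x k ≤ 1 := hxk.trans (pow_le_one₀ (by linarith) (by linarith))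
    have hexp : 2 ^ (k + 1) - 1 = (2 ^ k - 1) * 2 + 1 := by
      have := @Nat.one_le_two_pow k
      rw [pow_succ]; omega
    calc x (k + 1) ≤ x k ^ 2 - ε := hstep k (by omega)
      _ ≤ x k ^ 2 * (1 - ε) := by
        nlinarith [mul_nonneg hε₀ (sub_nonneg.2 (pow_le_one₀ hx₀ hx₁ (n := 2)))]
      _ ≤ ((1 - ε) ^ (2 ^ k - 1)) ^ 2 * (1 - ε) := by gcongr
      _ = (1 - ε) ^ (2 ^ (k + 1) - 1) := by rw [hexp, pow_succ _ ((2 ^ k - 1) * 2), pow_mul]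

theorem le_div_two_pow_of_le_one_sub_pow {ε : ℝ} {K : ℕ} (hK : 1 ≤ K) (hε : ε ≤ 1)
    (h : ε ≤ (1 - ε) ^ (2 ^ (K + 1) - 2)) : ε ≤ K / 2 ^ K := by
  by_contra! ht
  set t : ℝ := K / 2 ^ K
  set m : ℕ := 2 ^ (K + 1) - 2
  have h2K : (2 : ℝ) ≤ 2 ^ K := by simpa using pow_le_pow_right₀ one_le_two hK
  have hm : (m : ℝ) = 2 * 2 ^ K - 2 := by
    have : 2 ≤ 2 ^ (K + 1) := by simpa using Nat.pow_le_pow_right two_pos (by omega : 1 ≤ K + 1)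
    simp only [m]; rw [Nat.cast_sub this]; push_cast; ring
  -- `m t = 2K − 2K/2^K ≥ K`
  have hmt : (K : ℝ) ≤ m * t := by
    rw [hm, sub_mul, mul_assoc, mul_div_cancel₀ _ (by positivity)]
    have : 2 * t ≤ K := by
      rw [← mul_div_assoc, div_le_iff₀ (by positivity)]
      linarith [mul_le_mul_of_nonneg_left h2K (Nat.cast_nonneg (α := ℝ) K)]
    linarith
  have hexp_le : exp (-K) ≤ t := by
    have h2e : (2 : ℝ) ^ K ≤ exp K := by
      rw [← exp_one_pow]; gcongr; linarith [add_one_le_exp (1 : ℝ)]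
    rw [exp_neg, inv_le_iff_one_le_mul₀ (exp_pos _)]
    calc (1 : ℝ) ≤ K := by exact_mod_cast hK
      _ = t * 2 ^ K := by simp only [t]; field_simp
      _ ≤ t * exp K := by gcongr
  have := calc ε ≤ (1 - ε) ^ m := h
    _ ≤ (1 - t) ^ m := by gcongr
    _ ≤ exp (-t) ^ m := pow_le_pow_left₀ (by linarith) (one_sub_le_exp_neg t) m
    _ = exp (-(m * t)) := by rw [← exp_nat_mul]; ring_nf
    _ ≤ exp (-K) := by gcongr
    _ ≤ t := hexp_le
  linarith

theorem extProfile_of_lt {K k : ℕ} (v : Fin (K + 1) → ℝ) (hk : K < k) : extProfile K v k = 0 := by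
  simp [extProfile, show ¬k < K + 1 by omega]

namespace IsTwoChoiceProfile

variable {ρ : ℝ} {K : ℕ} {v : Fin (K + 1) → ℝ}

theorem antitone (hv : IsTwoChoiceProfile ρ K v) : Antitone (extProfile K v) := by
  refine antitone_nat_of_succ_le fun k => ?_
  rcases lt_trichotomy k K with hk | rfl | hk
  · exact hv.2.1 k hk
  · rw [extProfile_of_lt v (Nat.lt_succ_self k)]; exact hv.2.2.1
  · rw [extProfile_of_lt v hk, extProfile_of_lt v (by omega)]

theorem nonneg (hv : IsTwoChoiceProfile ρ K v) (k : ℕ) : 0 ≤ extProfile K v k := by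
  rcases le_or_gt k K with hk | hk
  · exact hv.2.2.1.trans (hv.antitone hk)
  · rw [extProfile_of_lt v hk]

theorem le_one (hv : IsTwoChoiceProfile ρ K v) (k : ℕ) : extProfile K v k ≤ 1 :=
  hv.1 ▸ hv.antitone (Nat.zero_le k)

-- `v_{k+1} − ρ v_k²` is invariant under the recursion and equals `−ρ v_K²` at `k = K`.
theorem extProfile_succ (hv : IsTwoChoiceProfile ρ K v) {k : ℕ} (hk : k ≤ K) :
    extProfile K v (k + 1) = ρ * (extProfile K v k ^ 2 - extProfile K v K ^ 2) := by
  induction hk using Nat.decreasingInduction with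
  | self => rw [extProfile_of_lt v (Nat.lt_succ_self K)]; ring
  | of_succ k hk ih =>
    have := hv.2.2.2 (k + 1) (by omega) hk
    rw [Nat.add_sub_cancel] at this
    linarith

theorem one_sub_extProfile_one (hv : IsTwoChoiceProfile ρ K v) :
    1 - extProfile K v 1 = ρ * extProfile K v K ^ 2 - (ρ - 1) := by
  rw [hv.extProfile_succ (Nat.zero_le K), hv.1]; ring

theorem succ_le_sq_sub (hv : IsTwoChoiceProfile ρ K v) (hρ : 1 ≤ ρ) {k : ℕ} (hk : k ≤ K) :
    extProfile K v (k + 1) ≤ extProfile K v k ^ 2 - (1 - extProfile K v 1) := by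
  rw [hv.extProfile_succ hk, hv.one_sub_extProfile_one]
  have h₀ := hv.nonneg k
  have h₁ := hv.le_one k
  nlinarith [mul_nonneg (sub_nonneg.2 hρ) (sub_nonneg.2 (pow_le_one₀ h₀ h₁ : extProfile K v k ^ 2 ≤ 1))]

theorem one_sub_extProfile_one_le (hv : IsTwoChoiceProfile ρ K v) (hρ : 1 ≤ ρ) (hK : 1 ≤ K) :
    1 - extProfile K v 1 ≤ K / 2 ^ K := by
  set ε := 1 - extProfile K v 1
  have hε₁ : ε ≤ 1 := by linarith [hv.nonneg 1]
  have hq : extProfile K v K ≤ (1 - ε) ^ (2 ^ K - 1) :=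
    le_one_sub_pow_of_le_sq_sub (sub_nonneg.2 (hv.le_one 1)) hε₁ hv.1 (fun k _ => hv.nonneg k)
      (fun k hk => hv.succ_le_sq_sub hρ hk.le) K le_rfl
  have hεq : ε ≤ extProfile K v K ^ 2 := by
    have := hv.succ_le_sq_sub hρ le_rfl
    rw [extProfile_of_lt v (Nat.lt_succ_self K)] at this
    linarith
  have hexp : 2 ^ (K + 1) - 2 = (2 ^ K - 1) * 2 := by
    have := @Nat.one_le_two_pow K
    rw [pow_succ]; omega
  refine le_div_two_pow_of_le_one_sub_pow hK hε₁ ?_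
  calc ε ≤ extProfile K v K ^ 2 := hεq
    _ ≤ ((1 - ε) ^ (2 ^ K - 1)) ^ 2 := by gcongr; exact hv.nonneg K
    _ = (1 - ε) ^ (2 ^ (K + 1) - 2) := by rw [hexp, pow_mul]

end IsTwoChoiceProfile

/-- for `ρ > 1`,
`√(1 − 1/ρ) ≤ P(ρ, K) ≤ √(1 − 1/ρ) + K 2^{−K}(1 + 1/(2√(ρ(ρ − 1))))`. -/
theorem problematic_bounds_supercritical (K : ℕ) (hK : 1 ≤ K) (ρ : ℝ) (hρ : 1 < ρ)
    (v : Fin (K + 1) → ℝ) (hv : IsTwoChoiceProfile ρ K v) :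
    Real.sqrt (1 - 1 / ρ) ≤ (1 - extProfile K v 1) + extProfile K v K ∧
    (1 - extProfile K v 1) + extProfile K v K ≤
      Real.sqrt (1 - 1 / ρ) +
        (K : ℝ) * (2 : ℝ) ^ (-(K : ℤ)) * (1 + 1 / (2 * Real.sqrt (ρ * (ρ - 1)))) := by
  have hρ₀ : 0 < ρ := by linarith
  have hα : 0 < 1 - 1 / ρ := by rw [sub_pos, div_lt_one hρ₀]; exact hρ
  have hρs : √(ρ * (ρ - 1)) = ρ * √(1 - 1 / ρ) := by
    rw [show ρ * (ρ - 1) = ρ ^ 2 * (1 - 1 / ρ) by field_simp, sqrt_mul (sq_nonneg ρ), sqrt_sq hρ₀.le]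
  rw [zpow_neg, zpow_natCast, ← div_eq_mul_inv, hρs]
  set s := √(1 - 1 / ρ)
  set q := extProfile K v K
  set ε := 1 - extProfile K v 1
  have hs : 0 < s := sqrt_pos.2 hα
  have hε : ε = ρ * (q ^ 2 - s ^ 2) := by
    rw [show ε = _ from hv.one_sub_extProfile_one, sq_sqrt hα.le]; field_simp; ring
  have hε₀ : 0 ≤ ε := sub_nonneg.2 (hv.le_one 1)
  have hεK := hv.one_sub_extProfile_one_le hρ.le hK
  have hsq : s ≤ q := (pow_le_pow_iff_left₀ hs.le (hv.nonneg K) two_ne_zero).1 (by nlinarith)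
  have hqs : q - s ≤ ε / (2 * (ρ * s)) := by
    rw [le_div_iff₀ (by positivity), hε]; nlinarith [two_mul_le_add_sq q s]
  constructor
  · linarith
  · calc ε + q ≤ s + ε * (1 + 1 / (2 * (ρ * s))) := by rw [mul_one_add, mul_one_div]; linarith
      _ ≤ s + K / 2 ^ K * (1 + 1 / (2 * (ρ * s))) := by gcongr
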